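/- Let a < b be real numbers and let χ_{[a,b)} be the characteristic function of [a,b). Let L > 2, set Δ := 1/L and ε₁ := 24 exp(−L), and define Φ₊^{a,b}(x) := L ∫_{−1/2−√Δ}^{1/2+√Δ} Γ(((x−a)/(b−a) − 1/2 − μ)L) dμ + ε₁ Γ((x−a)/(b−a) − 1/2) and Φ₋^{a,b}(x) := L ∫_{−1/2+√Δ}^{1/2−√Δ} Γ(((x−a)/(b−a) − 1/2 − μ)L) dμ − ε₁ Γ((x−a)/(b−a) − 1/2). Then Φ₋^{a,b}(x) ≤ χ_{[a,b)}(x) ≤ Φ₊^{a,b}(x) for all x ∈ ℝ, and ∫_{−∞}^{∞} Φ₊^{a,b}(x) dx = (1 + (2√Δ + ε₁))(b−a) and ∫_{−∞}^{∞} Φ₋^{a,b}(x) dx = (1 − (2√Δ + ε₁))(b−a). -/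

import Mathlib

open MeasureTheory

/-- The Gaussian weight `Γ(x) = exp(−πx²)`. -/
noncomputable def gauss (x : ℝ) : ℝ := Real.exp (-Real.pi * x ^ 2)

/-!
In the coordinate `y = (x - a)/(b - a) - 1/2`, the smoothed indicator `L ∫_c^d Γ((y - μ)L) dμ`
is the convolution of `χ_(c,d]` with the mass-one kernel `LΓ(L·)`, so it integrates to `d - c`,
and it equals `∫_{(y-d)L}^{(y-c)L} Γ`. For `|y| ≤ 1/2` the window of the majorant contains
`[-√L, √L]` (as `√Δ L = √L`), so it misses at most `4 exp(-πL/2)` of the mass of `Γ`; for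
`|y| ≥ 1/2` the window of the minorant lies beyond `±((|y| - 1/2)L + √L)` and carries at most
`2 exp(-π((|y| - 1/2)L + √L)²/2)`. Both Gaussian tails are absorbed by `ε₁ Γ(y) = 24 e^{-L} Γ(y)`
because `L + π(v + 1/2)² ≤ π(vL + √L)²/2` for `L > 2` and `v ≥ 0`.
-/

open Real Set
open scoped Convolution

lemma integrable_indicator_Ioc_one (c d : ℝ) : Integrable ((Ioc c d).indicator (1 : ℝ → ℝ)) :=
  (integrableOn_const measure_Ioc_lt_top.ne).integrable_indicator measurableSet_Ioc

lemma intervalIntegral_comp_sub_eq_convolution {g : ℝ → ℝ} {c d : ℝ} (hcd : c ≤ d) (y : ℝ) :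
    ∫ μ in c..d, g (y - μ) = ((Ioc c d).indicator 1 ⋆ g) y := by
  rw [convolution_lsmul, intervalIntegral.integral_of_le hcd,
    ← integral_indicator measurableSet_Ioc]
  congr 1 with μ
  by_cases h : μ ∈ Ioc c d <;> simp [h]

lemma integrable_intervalIntegral_comp_sub {g : ℝ → ℝ} (hg : Integrable g) (c d : ℝ) :
    Integrable fun y => ∫ μ in c..d, g (y - μ) := by
  wlog hcd : c ≤ d generalizing c d
  · simpa [intervalIntegral.integral_symm d c] using (this d c (le_of_not_ge hcd)).neg
  simp only [intervalIntegral_comp_sub_eq_convolution hcd]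
  exact (integrable_indicator_Ioc_one c d).integrable_convolution _ hg

lemma integral_intervalIntegral_comp_sub {g : ℝ → ℝ} (hg : Integrable g) (c d : ℝ) :
    ∫ y, ∫ μ in c..d, g (y - μ) = (d - c) * ∫ y, g y := by
  wlog hcd : c ≤ d generalizing c d
  · simp only [intervalIntegral.integral_symm d c, integral_neg, this d c (le_of_not_ge hcd)]
    ring
  simp only [intervalIntegral_comp_sub_eq_convolution hcd]
  rw [integral_convolution _ (integrable_indicator_Ioc_one c d) hg,
    ContinuousLinearMap.lsmul_apply, smul_eq_mul, integral_indicator_one measurableSet_Ioc,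
    volume_real_Ioc_of_le hcd]

lemma integral_comp_centered_rescale {a b : ℝ} (hab : a < b) (f : ℝ → ℝ) :
    ∫ x, f ((x - a) / (b - a) - 1 / 2) = (b - a) * ∫ y, f y := by
  have hba : b - a ≠ 0 := sub_ne_zero.2 hab.ne'
  have h : ∀ x, (x - a) / (b - a) - 1 / 2 = (x - (a + b) / 2) / (b - a) := fun x => by
    field_simp; ring
  simp only [h]
  rw [integral_sub_right_eq_self (fun x => f (x / (b - a))), Measure.integral_comp_div,
    abs_of_pos (sub_pos.2 hab), smul_eq_mul]

lemma indicator_Ico_eq_indicator_centered_rescale {a b : ℝ} (hab : a < b) (x : ℝ) :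
    (Ico a b).indicator (fun _ => (1 : ℝ)) x
      = (Ico (-1/2) (1/2)).indicator (fun _ => (1 : ℝ)) ((x - a) / (b - a) - 1 / 2) := by
  have hba : 0 < b - a := sub_pos.2 hab
  have h : x ∈ Ico a b ↔ (x - a) / (b - a) - 1 / 2 ∈ Ico (-1/2) (1/2) := by
    simp only [mem_Ico, le_sub_iff_add_le, sub_lt_iff_lt_add, le_div_iff₀ hba, div_lt_iff₀ hba]
    constructor <;> rintro ⟨h1, h2⟩ <;> constructor <;> linarith
  simp only [indicator_apply, h]

lemma gauss_nonneg (x : ℝ) : 0 ≤ gauss x := (exp_pos _).le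

lemma integrable_gauss : Integrable gauss := integrable_exp_neg_mul_sq pi_pos

lemma integral_gauss : ∫ x, gauss x = 1 := by
  simp only [gauss]
  rw [integral_gaussian, div_self pi_ne_zero, sqrt_one]

lemma gauss_neg (x : ℝ) : gauss (-x) = gauss x := by simp [gauss]

lemma gauss_le_gauss_of_abs_le {x y : ℝ} (h : |x| ≤ |y|) : gauss y ≤ gauss x := by
  have : x ^ 2 ≤ y ^ 2 := sq_le_sq.2 h
  exact exp_le_exp.2 (by nlinarith [pi_pos])

lemma integral_Ioi_gauss_le {t c : ℝ} (ht : 0 ≤ t) (htc : t ≤ c) :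
    ∫ x in Ioi c, gauss x ≤ 2 * exp (-(π * t ^ 2) / 2) := by
  have hpi : 0 < π / 2 := by positivity
  calc ∫ x in Ioi c, gauss x
      ≤ ∫ x in Ioi c, exp (-(π * t ^ 2) / 2) * exp (-(π / 2) * x ^ 2) := by
        refine setIntegral_mono_on integrable_gauss.integrableOn
          ((integrable_exp_neg_mul_sq hpi).const_mul _).integrableOn measurableSet_Ioi
          fun x hx => ?_
        have : t ^ 2 ≤ x ^ 2 := pow_le_pow_left₀ ht (htc.trans (le_of_lt hx)) 2
        rw [gauss, ← exp_add]
        gcongr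
        nlinarith [pi_pos]
    _ ≤ exp (-(π * t ^ 2) / 2) * ∫ x, exp (-(π / 2) * x ^ 2) := by
        rw [integral_const_mul]
        exact mul_le_mul_of_nonneg_left (setIntegral_le_integral (integrable_exp_neg_mul_sq hpi)
          (ae_of_all _ fun x => (exp_pos _).le)) (exp_pos _).le
    _ ≤ 2 * exp (-(π * t ^ 2) / 2) := by
        rw [integral_gaussian, show π / (π / 2) = 2 by field_simp, mul_comm]
        exact mul_le_mul_of_nonneg_right ((sqrt_le_left zero_le_two).2 (by norm_num)) (exp_pos _).le

lemma intervalIntegral_gauss_le_one (p q : ℝ) : ∫ x in p..q, gauss x ≤ 1 := by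
  rcases le_total p q with h | h
  · rw [intervalIntegral.integral_of_le h, ← integral_gauss]
    exact setIntegral_le_integral integrable_gauss (ae_of_all _ gauss_nonneg)
  · rw [intervalIntegral.integral_symm]
    linarith [intervalIntegral.integral_nonneg (μ := volume) h fun u _ => gauss_nonneg u]

lemma intervalIntegral_gauss_le_integral_Ioi (p q : ℝ) :
    ∫ x in p..q, gauss x ≤ ∫ x in Ioi p, gauss x := by
  have hsplit := intervalIntegral.integral_interval_add_Ioi (f := gauss) (μ := volume)
    (a := p) (b := q) integrable_gauss.integrableOn integrable_gauss.integrableOn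
  have htail : 0 ≤ ∫ x in Ioi q, gauss x :=
    setIntegral_nonneg measurableSet_Ioi fun x _ => gauss_nonneg x
  linarith

lemma intervalIntegral_gauss_reflect (p q : ℝ) : ∫ x in p..q, gauss x = ∫ x in -q..-p, gauss x := by
  simpa [gauss_neg] using (intervalIntegral.integral_comp_neg (a := -q) (b := -p) gauss).symm

lemma integral_Iic_gauss (p : ℝ) : ∫ x in Iic p, gauss x = ∫ x in Ioi (-p), gauss x := by
  simpa [gauss_neg] using (integral_comp_neg_Ioi (-p) gauss).symm

lemma intervalIntegral_gauss_le_of_le_or_le {t p q : ℝ} (ht : 0 ≤ t) (h : t ≤ p ∨ q ≤ -t) :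
    ∫ x in p..q, gauss x ≤ 2 * exp (-(π * t ^ 2) / 2) := by
  rcases h with h | h
  · exact (intervalIntegral_gauss_le_integral_Ioi p q).trans (integral_Ioi_gauss_le ht h)
  · rw [intervalIntegral_gauss_reflect]
    exact (intervalIntegral_gauss_le_integral_Ioi _ _).trans
      (integral_Ioi_gauss_le ht (by linarith))

lemma one_sub_le_intervalIntegral_gauss {t p q : ℝ} (ht : 0 ≤ t) (hp : p ≤ -t) (hq : t ≤ q) :
    1 - 4 * exp (-(π * t ^ 2) / 2) ≤ ∫ x in p..q, gauss x := by
  have hint : ∀ s : Set ℝ, IntegrableOn gauss s := fun _ => integrable_gauss.integrableOn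
  have hmid := intervalIntegral.integral_Iic_sub_Iic (hint (Iic p)) (hint (Iic q))
  have hall := intervalIntegral.integral_Iic_add_Ioi (hint (Iic q)) (hint (Ioi q))
  rw [integral_gauss] at hall
  linarith [integral_Iic_gauss p, integral_Ioi_gauss_le ht (by linarith : t ≤ -p),
    integral_Ioi_gauss_le ht hq]

noncomputable def gaussSmoothedIndicator (L c d y : ℝ) : ℝ := L * ∫ μ in c..d, gauss ((y - μ) * L)

lemma gaussSmoothedIndicator_eq_intervalIntegral {L : ℝ} (hL : 0 < L) (c d y : ℝ) :
    gaussSmoothedIndicator L c d y = ∫ ν in (y - d) * L..(y - c) * L, gauss ν := by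
  rw [gaussSmoothedIndicator, intervalIntegral.integral_comp_sub_left (fun u => gauss (u * L)) y,
    intervalIntegral.integral_comp_mul_right gauss hL.ne', smul_eq_mul, mul_inv_cancel_left₀ hL.ne']

lemma integrable_gaussSmoothedIndicator {L : ℝ} (hL : L ≠ 0) (c d : ℝ) :
    Integrable (gaussSmoothedIndicator L c d) :=
  (integrable_intervalIntegral_comp_sub (integrable_gauss.comp_mul_right' hL) c d).const_mul L

lemma integral_gaussSmoothedIndicator {L : ℝ} (hL : 0 < L) (c d : ℝ) :
    ∫ y, gaussSmoothedIndicator L c d y = d - c := by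
  unfold gaussSmoothedIndicator
  rw [integral_const_mul,
    integral_intervalIntegral_comp_sub (integrable_gauss.comp_mul_right' hL.ne'),
    Measure.integral_comp_mul_right, integral_gauss, abs_of_pos (inv_pos.2 hL), smul_eq_mul]
  field_simp

lemma gaussSmoothedIndicator_le_one {L : ℝ} (hL : 0 < L) (c d y : ℝ) :
    gaussSmoothedIndicator L c d y ≤ 1 := by
  rw [gaussSmoothedIndicator_eq_intervalIntegral hL]
  exact intervalIntegral_gauss_le_one _ _

lemma gaussSmoothedIndicator_nonneg {L c d : ℝ} (hL : 0 ≤ L) (hcd : c ≤ d) (y : ℝ) :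
    0 ≤ gaussSmoothedIndicator L c d y :=
  mul_nonneg hL (intervalIntegral.integral_nonneg hcd fun _ _ => gauss_nonneg _)

lemma exp_neg_pi_mul_sq_div_two_le {L v : ℝ} (hL : 2 < L) (hv : 0 ≤ v) :
    exp (-(π * (v * L + √L) ^ 2) / 2) ≤ exp (-L) * gauss (v + 1 / 2) := by
  have hsq : √L ^ 2 = L := sq_sqrt (by linarith)
  have hsqrt : 1 ≤ √L := by rw [one_le_sqrt]; linarith
  rw [gauss, ← exp_add]
  apply exp_le_exp.2
  nlinarith [pi_gt_three, mul_nonneg (mul_nonneg hv hv) (by nlinarith : (0:ℝ) ≤ L ^ 2 - 2),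
    mul_nonneg hv (by nlinarith : (0:ℝ) ≤ L * √L - 1)]

lemma sqrt_one_div_mul_self {L : ℝ} (hL : 0 ≤ L) : √(1 / L) * L = √L := by
  rw [sqrt_div' _ hL, sqrt_one, one_div_mul_eq_div, div_sqrt]

/- With `y = (x - a)/(b - a) - 1/2` and `Δ = 1/L`, `Φ₊^{a,b}(x) = gaussMajorant L y` and
`Φ₋^{a,b}(x) = gaussMinorant L y`. For `L ≤ 4` the window of the minorant is reversed, which is why
the interval integrals above are oriented and not assumed to have ordered bounds. -/
noncomputable def gaussMajorant (L y : ℝ) : ℝ :=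
  gaussSmoothedIndicator L (-1/2 - √(1 / L)) (1/2 + √(1 / L)) y + 24 * exp (-L) * gauss y

noncomputable def gaussMinorant (L y : ℝ) : ℝ :=
  gaussSmoothedIndicator L (-1/2 + √(1 / L)) (1/2 - √(1 / L)) y - 24 * exp (-L) * gauss y

lemma integral_gaussMajorant {L : ℝ} (hL : 0 < L) :
    ∫ y, gaussMajorant L y = 1 + (2 * √(1 / L) + 24 * exp (-L)) := by
  unfold gaussMajorant
  rw [integral_add (integrable_gaussSmoothedIndicator hL.ne' _ _) (integrable_gauss.const_mul _),
    integral_gaussSmoothedIndicator hL, integral_const_mul, integral_gauss]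
  ring

lemma integral_gaussMinorant {L : ℝ} (hL : 0 < L) :
    ∫ y, gaussMinorant L y = 1 - (2 * √(1 / L) + 24 * exp (-L)) := by
  unfold gaussMinorant
  rw [integral_sub (integrable_gaussSmoothedIndicator hL.ne' _ _) (integrable_gauss.const_mul _),
    integral_gaussSmoothedIndicator hL, integral_const_mul, integral_gauss]
  ring

lemma one_le_gaussMajorant {L y : ℝ} (hL : 2 < L) (hy : |y| ≤ 1 / 2) : 1 ≤ gaussMajorant L y := by
  have hsL := sqrt_one_div_mul_self (by linarith : (0:ℝ) ≤ L)
  have hyL := abs_le.1 hy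
  have hint := one_sub_le_intervalIntegral_gauss (sqrt_nonneg L)
    (p := (y - (1/2 + √(1 / L))) * L) (q := (y - (-1/2 - √(1 / L))) * L)
    (by nlinarith) (by nlinarith)
  have htail : exp (-(π * √L ^ 2) / 2) ≤ exp (-L) * gauss y := by
    simpa using (exp_neg_pi_mul_sq_div_two_le hL le_rfl).trans
      (mul_le_mul_of_nonneg_left (gauss_le_gauss_of_abs_le (by simpa using hy)) (exp_pos _).le)
  rw [gaussMajorant, gaussSmoothedIndicator_eq_intervalIntegral (by linarith)]
  linarith [mul_nonneg (exp_pos (-L)).le (gauss_nonneg y)]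

lemma gaussMinorant_nonpos {L y : ℝ} (hL : 2 < L) (hy : 1 / 2 ≤ |y|) : gaussMinorant L y ≤ 0 := by
  have hsL := sqrt_one_div_mul_self (by linarith : (0:ℝ) ≤ L)
  have hint := intervalIntegral_gauss_le_of_le_or_le (t := (|y| - 1 / 2) * L + √L)
    (p := (y - (1/2 - √(1 / L))) * L) (q := (y - (-1/2 + √(1 / L))) * L)
    (by have := sqrt_nonneg L; nlinarith) <| by
      rcases abs_cases y with ⟨hy', -⟩ | ⟨hy', -⟩ <;> rw [hy'] <;> [left; right] <;> linarith
  have htail := exp_neg_pi_mul_sq_div_two_le hL (by linarith : 0 ≤ |y| - 1 / 2)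
  rw [sub_add_cancel] at htail
  replace htail := htail.trans
    (mul_le_mul_of_nonneg_left (gauss_le_gauss_of_abs_le (abs_abs y).ge) (exp_pos _).le)
  rw [gaussMinorant, gaussSmoothedIndicator_eq_intervalIntegral (by linarith)]
  linarith [mul_nonneg (exp_pos (-L)).le (gauss_nonneg y)]

lemma gaussMinorant_le_indicator {L : ℝ} (hL : 2 < L) (y : ℝ) :
    gaussMinorant L y ≤ (Ico (-1/2) (1/2)).indicator (fun _ => (1 : ℝ)) y := by
  by_cases hy : y ∈ Ico (-1/2) (1/2)
  · rw [indicator_of_mem hy, gaussMinorant]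
    linarith [gaussSmoothedIndicator_le_one (by linarith) (-1/2 + √(1 / L)) (1/2 - √(1 / L)) y,
      mul_nonneg (exp_pos (-L)).le (gauss_nonneg y)]
  · rw [indicator_of_notMem hy]
    refine gaussMinorant_nonpos hL ?_
    contrapose! hy
    exact ⟨by linarith [neg_abs_le y], by linarith [le_abs_self y]⟩

lemma indicator_le_gaussMajorant {L : ℝ} (hL : 2 < L) (y : ℝ) :
    (Ico (-1/2) (1/2)).indicator (fun _ => (1 : ℝ)) y ≤ gaussMajorant L y := by
  by_cases hy : y ∈ Ico (-1/2) (1/2)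
  · rw [indicator_of_mem hy]
    exact one_le_gaussMajorant hL (abs_le.2 ⟨by linarith [hy.1], hy.2.le⟩)
  · rw [indicator_of_notMem hy, gaussMajorant]
    have hcd : -1/2 - √(1 / L) ≤ 1/2 + √(1 / L) := by linarith [sqrt_nonneg (1 / L)]
    linarith [gaussSmoothedIndicator_nonneg (L := L) (by linarith) hcd y,
      mul_nonneg (mul_nonneg (by norm_num : (0:ℝ) ≤ 24) (exp_pos (-L)).le) (gauss_nonneg y)]

theorem stmt4 (a b : ℝ) (hab : a < b) (L : ℝ) (hL : 2 < L) (Δ ε₁ : ℝ)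
    (hΔ : Δ = 1 / L) (hε₁ : ε₁ = 24 * Real.exp (-L))
    (Φp Φm : ℝ → ℝ)
    (hΦp : ∀ x, Φp x =
      L * (∫ μ in (-1/2 - Real.sqrt Δ)..(1/2 + Real.sqrt Δ),
          gauss (((x - a)/(b - a) - 1/2 - μ) * L))
        + ε₁ * gauss ((x - a)/(b - a) - 1/2))
    (hΦm : ∀ x, Φm x =
      L * (∫ μ in (-1/2 + Real.sqrt Δ)..(1/2 - Real.sqrt Δ),
          gauss (((x - a)/(b - a) - 1/2 - μ) * L))
        - ε₁ * gauss ((x - a)/(b - a) - 1/2)) :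
    (∀ x : ℝ,
      Φm x ≤ (Set.Ico a b).indicator (fun _ => (1 : ℝ)) x ∧
      (Set.Ico a b).indicator (fun _ => (1 : ℝ)) x ≤ Φp x) ∧
    (∫ x : ℝ, Φp x) = (1 + (2 * Real.sqrt Δ + ε₁)) * (b - a) ∧
    (∫ x : ℝ, Φm x) = (1 - (2 * Real.sqrt Δ + ε₁)) * (b - a) := by
  subst hΔ hε₁
  have hp : Φp = fun x => gaussMajorant L ((x - a) / (b - a) - 1 / 2) := funext hΦp
  have hm : Φm = fun x => gaussMinorant L ((x - a) / (b - a) - 1 / 2) := funext hΦm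
  subst hp hm
  refine ⟨fun x => ?_, ?_, ?_⟩
  · rw [indicator_Ico_eq_indicator_centered_rescale hab]
    exact ⟨gaussMinorant_le_indicator hL _, indicator_le_gaussMajorant hL _⟩
  · rw [integral_comp_centered_rescale hab, integral_gaussMajorant (by linarith), mul_comm]
  · rw [integral_comp_centered_rescale hab, integral_gaussMinorant (by linarith), mul_comm]
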